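/- For every p ∈ [2, ∞), every n ∈ ℕ, every k ∈ {0, 1, …, n}, and every h : {−1,1}^n → ℝ, the k-th Rademacher projection satisfies ‖Rad_k h‖_p ≤ p^{k/2} ‖h‖_p. -/

import Mathlib

open Finset

/-- The normalized `L_p` norm of a function on the discrete hypercube `{-1,1}^n`
(coordinates encoded by `Bool`). -/
noncomputable def pnorm {n : ℕ} (p : ℝ) (h : (Fin n → Bool) → ℝ) : ℝ :=
  ((∑ ε : Fin n → Bool, |h ε| ^ p) / 2 ^ n) ^ (1 / p)

/-- The Walsh function `W_A(ε) = Π_{j ∈ A} ε_j`. -/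
def walsh {n : ℕ} (A : Finset (Fin n)) (ε : Fin n → Bool) : ℝ :=
  ∏ j ∈ A, (if ε j then (1 : ℝ) else -1)

/-- The Fourier–Walsh coefficient `ĥ(A) = 2^{-n} Σ_ε h(ε) W_A(ε)`. -/
noncomputable def fourierCoef {n : ℕ} (h : (Fin n → Bool) → ℝ) (A : Finset (Fin n)) : ℝ :=
  (∑ ε : Fin n → Bool, h ε * walsh A ε) / 2 ^ n

/-- `Δ_S^α h = Σ_{A ∩ S ≠ ∅} |A ∩ S|^α ĥ(A) W_A`. -/
noncomputable def deltaPow {n : ℕ} (S : Finset (Fin n)) (α : ℝ) (h : (Fin n → Bool) → ℝ) :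
    (Fin n → Bool) → ℝ :=
  fun ε => ∑ A : Finset (Fin n),
    if (A ∩ S).Nonempty then ((A ∩ S).card : ℝ) ^ α * fourierCoef h A * walsh A ε else 0

/-- `E_S h`: averaging of `h` over the coordinates in `S`. -/
noncomputable def condAvg {n : ℕ} (S : Finset (Fin n)) (h : (Fin n → Bool) → ℝ) :
    (Fin n → Bool) → ℝ :=
  fun ε => (∑ δ : Fin n → Bool, h (fun j => if j ∈ S then δ j else ε j)) / 2 ^ n

/-- The `k`-th Rademacher projection `Rad_k h = Σ_{|A| = k} ĥ(A) W_A`. -/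
noncomputable def radProj {n : ℕ} (k : ℕ) (h : (Fin n → Bool) → ℝ) :
    (Fin n → Bool) → ℝ :=
  fun ε => ∑ A ∈ powersetCard k (univ : Finset (Fin n)), fourierCoef h A * walsh A ε

/-!
Hypercontractivity in the form `‖f‖_p ^ 2 ≤ ∑_A p ^ |A| f̂(A) ^ 2` is proved by induction on the
dimension. Splitting off the first coordinate, `f(±1, ε) = e(ε) ± d(ε)` with `ê(B) = f̂(B)` and
`d̂(B) = f̂({0} ∪ B)`; the two-point inequality `|a + b| ^ p + |a - b| ^ p ≤ 2 (a² + p b²) ^ (p/2)`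
followed by Minkowski's inequality in `L^(p/2)` gives `‖f‖_p ^ 2 ≤ ‖e‖_p ^ 2 + p ‖d‖_p ^ 2`.
For `f = Rad_k h` the right-hand side is `p ^ k ∑_{|A| = k} ĥ(A) ^ 2`, which is at most
`p ^ k ‖h‖_2 ^ 2 ≤ p ^ k ‖h‖_p ^ 2` by Bessel's inequality and monotonicity of `p ↦ ‖h‖_p`.
-/

open Real

section TwoPoint

open Set

variable {q β u : ℝ}

lemma hasDerivAt_one_add_rpow_add_one_sub_rpow (hu₀ : -1 < u) (hu₁ : u < 1) :
    HasDerivAt (fun x => (1 + x) ^ q + (1 - x) ^ q)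
      (q * ((1 + u) ^ (q - 1) - (1 - u) ^ (q - 1))) u := by
  have hadd := ((hasDerivAt_id' u).const_add 1).rpow_const (p := q) (Or.inl (by linarith))
  have hsub := ((hasDerivAt_id' u).const_sub 1).rpow_const (p := q) (Or.inl (by linarith))
  exact (hadd.add hsub).congr_deriv (by ring)

lemma hasDerivAt_one_add_rpow_sub_one_sub_rpow (hu₀ : -1 < u) (hu₁ : u < 1) :
    HasDerivAt (fun x => (1 + x) ^ q - (1 - x) ^ q)
      (q * ((1 + u) ^ (q - 1) + (1 - u) ^ (q - 1))) u := by
  have hadd := ((hasDerivAt_id' u).const_add 1).rpow_const (p := q) (Or.inl (by linarith))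
  have hsub := ((hasDerivAt_id' u).const_sub 1).rpow_const (p := q) (Or.inl (by linarith))
  exact (hadd.sub hsub).congr_deriv (by ring)

lemma hasDerivAt_one_add_mul_sq_rpow (hβ : 0 ≤ β) :
    HasDerivAt (fun x => (1 + β * x ^ 2) ^ q) (2 * β * u * q * (1 + β * u ^ 2) ^ (q - 1)) u := by
  have h := (((hasDerivAt_pow 2 u).const_mul β).const_add 1).rpow_const (p := q)
    (Or.inl (by positivity))
  convert h using 1
  push_cast
  ring

lemma one_add_rpow_add_one_sub_rpow_le_of_le_one (hq₀ : 0 ≤ q) (hq₁ : q ≤ 1)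
    (hβ : 0 ≤ β) (hu : u ∈ Icc (0 : ℝ) 1) :
    (1 + u) ^ q + (1 - u) ^ q ≤ 2 * (1 + β * u ^ 2) ^ q := by
  have hadd := rpow_one_add_le_one_add_mul_self (by linarith [hu.1]) hq₀ hq₁ (s := u)
  have hsub := rpow_one_add_le_one_add_mul_self (by linarith [hu.2]) hq₀ hq₁ (s := -u)
  have hone := one_le_rpow (le_add_of_nonneg_right (by positivity : 0 ≤ β * u ^ 2)) hq₀
  rw [← sub_eq_add_neg] at hsub
  linarith

lemma one_add_rpow_sub_one_sub_rpow_le_of_le_one (hq₀ : 0 ≤ q) (hq₁ : q ≤ 1)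
    (hβ : q + 1 ≤ 4 * β) (hu : u ∈ Icc (0 : ℝ) 1) :
    (1 + u) ^ q - (1 - u) ^ q ≤ 4 * β * u * (1 + β * u ^ 2) ^ q := by
  obtain ⟨hu₀, hu₁⟩ := hu
  have hβ₀ : 0 ≤ β := by linarith
  have hadd := rpow_one_add_le_one_add_mul_self (by linarith) hq₀ hq₁ (s := u)
  have hsub := self_le_rpow_of_le_one (by linarith) (by linarith) hq₁ (x := 1 - u)
  have hone := one_le_rpow (le_add_of_nonneg_right (by positivity : 0 ≤ β * u ^ 2)) hq₀
  have : 4 * β * u ≤ 4 * β * u * (1 + β * u ^ 2) ^ q :=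
    le_mul_of_one_le_right (by positivity) hone
  nlinarith

lemma one_add_rpow_add_one_sub_rpow_le_of_sub_le (hq : 0 ≤ q) (hβ : 0 ≤ β)
    (hodd : ∀ u ∈ Icc (0 : ℝ) 1,
      (1 + u) ^ (q - 1) - (1 - u) ^ (q - 1) ≤ 4 * β * u * (1 + β * u ^ 2) ^ (q - 1))
    (hu : u ∈ Icc (0 : ℝ) 1) : (1 + u) ^ q + (1 - u) ^ q ≤ 2 * (1 + β * u ^ 2) ^ q := by
  refine image_le_of_deriv_right_le_deriv_boundary
    (by fun_prop (disch := exact Or.inr hq))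
    (fun x hx =>
      (hasDerivAt_one_add_rpow_add_one_sub_rpow (by linarith [hx.1]) hx.2).hasDerivWithinAt)
    (by norm_num) (by fun_prop (disch := exact Or.inr hq))
    (fun x _ => ((hasDerivAt_one_add_mul_sq_rpow hβ).const_mul 2).hasDerivWithinAt)
    (fun x hx => ?_) hu
  have := mul_le_mul_of_nonneg_left (hodd x (Ico_subset_Icc_self hx)) hq
  linarith

lemma one_add_rpow_sub_one_sub_rpow_le_of_add_le (hq : 0 ≤ q) (hβ : 2 * q ≤ 4 * β)
    (heven : ∀ u ∈ Icc (0 : ℝ) 1,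
      (1 + u) ^ (q - 1) + (1 - u) ^ (q - 1) ≤ 2 * (1 + β * u ^ 2) ^ (q - 1))
    (hu : u ∈ Icc (0 : ℝ) 1) :
    (1 + u) ^ q - (1 - u) ^ q ≤ 4 * β * u * (1 + β * u ^ 2) ^ q := by
  have hβ₀ : 0 ≤ β := by linarith
  refine image_le_of_deriv_right_le_deriv_boundary
    (by fun_prop (disch := exact Or.inr hq))
    (fun x hx =>
      (hasDerivAt_one_add_rpow_sub_one_sub_rpow (by linarith [hx.1]) hx.2).hasDerivWithinAt)
    (by norm_num) (by fun_prop (disch := exact Or.inr hq))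
    (fun x _ => (((hasDerivAt_id' x).const_mul (4 * β)).mul
      (hasDerivAt_one_add_mul_sq_rpow hβ₀)).hasDerivWithinAt)
    (fun x hx => ?_) hu
  obtain ⟨hx₀, hx₁⟩ := hx
  have hB : (1 + β * x ^ 2) ^ (q - 1) ≤ (1 + β * x ^ 2) ^ q :=
    rpow_le_rpow_of_exponent_le (le_add_of_nonneg_right (by positivity)) (by linarith)
  have := mul_le_mul_of_nonneg_left (heven x ⟨hx₀, hx₁.le⟩) hq
  have : 0 ≤ 4 * β * x * (2 * β * x * q * (1 + β * x ^ 2) ^ (q - 1)) := by positivity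
  nlinarith [rpow_nonneg (by positivity : (0 : ℝ) ≤ 1 + β * x ^ 2) (q - 1)]

/-- Comparing derivatives, the inequality for `(1 + u) ^ q + (1 - u) ^ q` follows from the one
for `(1 + u) ^ (q - 1) - (1 - u) ^ (q - 1)`, and that one from the inequality for the sum at
exponent `q - 2`; this lowers `q` into `[0, 1]`, where Bernoulli's inequality applies. -/
theorem one_add_rpow_add_one_sub_rpow_le (hq : 0 ≤ q) (hβ : 2 * q - 1 ≤ 4 * β)
    (hβ₀ : 0 ≤ β) (hu : u ∈ Icc (0 : ℝ) 1) :
    (1 + u) ^ q + (1 - u) ^ q ≤ 2 * (1 + β * u ^ 2) ^ q := by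
  obtain ⟨m, hm⟩ := exists_nat_ge q
  induction m generalizing q u with
  | zero => exact one_add_rpow_add_one_sub_rpow_le_of_le_one hq (by simp at hm; linarith) hβ₀ hu
  | succ m ih =>
    rcases le_or_gt q 1 with hq₁ | hq₁
    · exact one_add_rpow_add_one_sub_rpow_le_of_le_one hq hq₁ hβ₀ hu
    refine one_add_rpow_add_one_sub_rpow_le_of_sub_le hq hβ₀ (fun v hv => ?_) hu
    rcases le_or_gt q 2 with hq₂ | hq₂
    · exact one_add_rpow_sub_one_sub_rpow_le_of_le_one (by linarith) (by linarith) (by linarith) hv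
    refine one_add_rpow_sub_one_sub_rpow_le_of_add_le (by linarith) (by linarith)
      (fun w hw => ?_) hv
    rw [sub_sub, one_add_one_eq_two]
    exact ih (by linarith) (by linarith) hw (by push_cast at hm; linarith)

end TwoPoint

lemma sq_rpow_half (x p : ℝ) : (x ^ 2) ^ (p / 2) = |x| ^ p := by
  rw [← sq_abs, ← rpow_natCast, ← rpow_mul (abs_nonneg x)]
  ring_nf

/-- The substitution `(a ± b) ^ 2 = r (1 ± v)`, with `r = a ^ 2 + b ^ 2` and
`v = 2ab / r ∈ [-1, 1]`, reduces this to the case `q = p / 2`, `β = (p - 1) / 4` of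
`one_add_rpow_add_one_sub_rpow_le`. -/
theorem abs_add_rpow_add_abs_sub_rpow_le {p : ℝ} (hp : 2 ≤ p) (a b : ℝ) :
    |a + b| ^ p + |a - b| ^ p ≤ 2 * (a ^ 2 + p * b ^ 2) ^ (p / 2) := by
  set r := a ^ 2 + b ^ 2 with hr_def
  rcases (by positivity : 0 ≤ r).eq_or_lt with hr | hr
  · obtain ⟨rfl, rfl⟩ : a = 0 ∧ b = 0 := by
      constructor <;> nlinarith [sq_nonneg a, sq_nonneg b]
    simp [zero_rpow (by linarith : p ≠ 0), zero_rpow (by linarith : p / 2 ≠ 0)]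
  set v := 2 * a * b / r
  have hrv : r * v = 2 * a * b := mul_div_cancel₀ _ hr.ne'
  have hv : |v| ≤ 1 := by
    rw [abs_div, abs_of_pos hr, div_le_one hr, abs_mul, abs_mul, abs_two]
    nlinarith [sq_nonneg (|a| - |b|), sq_abs a, sq_abs b]
  have hv₁ : 0 ≤ 1 + v := by linarith [neg_abs_le v]
  have hv₂ : 0 ≤ 1 - v := by linarith [le_abs_self v]
  have hadd : |a + b| ^ p = r ^ (p / 2) * (1 + v) ^ (p / 2) := by
    rw [← sq_rpow_half, ← mul_rpow hr.le hv₁]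
    congr 1
    linear_combination -hr_def - hrv
  have hsub : |a - b| ^ p = r ^ (p / 2) * (1 - v) ^ (p / 2) := by
    rw [← sq_rpow_half, ← mul_rpow hr.le hv₂]
    congr 1
    linear_combination -hr_def + hrv
  have hbonami :
      (1 + v) ^ (p / 2) + (1 - v) ^ (p / 2) ≤ 2 * (1 + (p - 1) / 4 * v ^ 2) ^ (p / 2) := by
    have := one_add_rpow_add_one_sub_rpow_le (q := p / 2) (β := (p - 1) / 4) (by linarith)
      (by linarith) (by linarith) ⟨abs_nonneg v, hv⟩
    rcases abs_cases v with ⟨hv', -⟩ | ⟨hv', -⟩ <;> rw [hv'] at this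
    · exact this
    · rwa [neg_sq, sub_neg_eq_add, ← sub_eq_add_neg, add_comm] at this
  have hscale : r * (1 + (p - 1) / 4 * v ^ 2) ≤ a ^ 2 + p * b ^ 2 := by
    have hv2 : r * v ^ 2 ≤ 4 * b ^ 2 := by
      refine le_of_mul_le_mul_left ?_ hr
      have : r * (r * v ^ 2) = 4 * a ^ 2 * b ^ 2 := by linear_combination (r * v + 2 * a * b) * hrv
      rw [this, hr_def]
      nlinarith [sq_nonneg (b ^ 2)]
    nlinarith
  have hB : 0 ≤ 1 + (p - 1) / 4 * v ^ 2 := by nlinarith [sq_nonneg v]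
  calc |a + b| ^ p + |a - b| ^ p = r ^ (p / 2) * ((1 + v) ^ (p / 2) + (1 - v) ^ (p / 2)) := by
        rw [hadd, hsub, mul_add]
    _ ≤ r ^ (p / 2) * (2 * (1 + (p - 1) / 4 * v ^ 2) ^ (p / 2)) := by gcongr
    _ = 2 * (r * (1 + (p - 1) / 4 * v ^ 2)) ^ (p / 2) := by
        rw [mul_rpow hr.le hB]; ring
    _ ≤ 2 * (a ^ 2 + p * b ^ 2) ^ (p / 2) := by gcongr

section Cube

variable {n : ℕ}

lemma sum_cube_succ (F : (Fin (n + 1) → Bool) → ℝ) :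
    ∑ ε, F ε = ∑ ε : Fin n → Bool, (F (Fin.cons true ε) + F (Fin.cons false ε)) := by
  rw [← (Fin.consEquiv fun _ => Bool).sum_comp, Fintype.sum_prod_type, Fintype.sum_bool,
    ← sum_add_distrib]
  rfl

lemma walsh_eq_prod_univ (A : Finset (Fin n)) (ε : Fin n → Bool) :
    walsh A ε = ∏ j, if j ∈ A then (if ε j then (1 : ℝ) else -1) else 1 := by
  rw [prod_ite_mem, Finset.univ_inter, walsh]

lemma sum_walsh_mul_walsh (A B : Finset (Fin n)) :
    ∑ ε, walsh A ε * walsh B ε = if A = B then 2 ^ n else 0 := by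
  set χ : Finset (Fin n) → Fin n → Bool → ℝ :=
    fun S j b => if j ∈ S then (if b then 1 else -1) else 1
  have hfactor : ∀ j, ∑ b, χ A j b * χ B j b = if (j ∈ A ↔ j ∈ B) then 2 else 0 := by
    intro j
    by_cases hA : j ∈ A <;> by_cases hB : j ∈ B <;> norm_num [χ, hA, hB]
  simp_rw [walsh_eq_prod_univ, ← prod_mul_distrib]
  rw [← Fintype.prod_sum (fun j b => χ A j b * χ B j b)]
  simp_rw [hfactor]
  split_ifs with hAB
  · simp [hAB]
  · obtain ⟨j, hj⟩ : ∃ j, ¬(j ∈ A ↔ j ∈ B) := by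
      by_contra! h
      exact hAB (Finset.ext h)
    exact prod_eq_zero (mem_univ j) (if_neg hj)

lemma sum_mul_sum_walsh (u : (Fin n → Bool) → ℝ) (s : Finset (Finset (Fin n)))
    (c : Finset (Fin n) → ℝ) :
    ∑ ε, u ε * ∑ B ∈ s, c B * walsh B ε = 2 ^ n * ∑ B ∈ s, c B * fourierCoef u B := by
  have hc : (2 : ℝ) ^ n ≠ 0 := by positivity
  simp_rw [fourierCoef, mul_sum, mul_div_assoc', mul_div_cancel_left₀ _ hc]
  rw [sum_comm]
  refine sum_congr rfl fun B _ => ?_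
  rw [mul_sum]
  exact sum_congr rfl fun ε _ => by ring

lemma fourierCoef_sum_walsh (s : Finset (Finset (Fin n))) (c : Finset (Fin n) → ℝ)
    (A : Finset (Fin n)) :
    fourierCoef (fun ε => ∑ B ∈ s, c B * walsh B ε) A = if A ∈ s then c A else 0 := by
  have hA : ∀ B, fourierCoef (walsh A) B = if A = B then 1 else 0 := by
    intro B
    rw [fourierCoef, sum_walsh_mul_walsh]
    split_ifs <;> simp
  rw [fourierCoef]
  simp_rw [mul_comm _ (walsh A _)]
  rw [sum_mul_sum_walsh, mul_div_cancel_left₀ _ (by positivity)]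
  simp_rw [hA, mul_ite, mul_one, mul_zero]
  exact sum_ite_eq s A c

lemma pnorm_nonneg (p : ℝ) (f : (Fin n → Bool) → ℝ) : 0 ≤ pnorm p f := by
  unfold pnorm
  positivity

lemma pnorm_two_sq (f : (Fin n → Bool) → ℝ) : pnorm 2 f ^ 2 = (∑ ε, f ε ^ 2) / 2 ^ n := by
  rw [pnorm, ← rpow_mul_natCast (by positivity)]
  norm_num

lemma sum_fourierCoef_sq_le_pnorm_two_sq (h : (Fin n → Bool) → ℝ)
    (s : Finset (Finset (Fin n))) :
    ∑ A ∈ s, fourierCoef h A ^ 2 ≤ pnorm 2 h ^ 2 := by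
  set g : (Fin n → Bool) → ℝ := fun ε => ∑ B ∈ s, fourierCoef h B * walsh B ε
  have hhg : ∑ ε, h ε * g ε = 2 ^ n * ∑ A ∈ s, fourierCoef h A ^ 2 := by
    simp_rw [g, sum_mul_sum_walsh, sq]
  have hgg : ∑ ε, g ε * g ε = 2 ^ n * ∑ A ∈ s, fourierCoef h A ^ 2 := by
    rw [show ∑ ε, g ε * g ε = _ from sum_mul_sum_walsh g s (fourierCoef h)]
    congr 1
    refine sum_congr rfl fun A hA => ?_
    rw [fourierCoef_sum_walsh, if_pos hA, sq]
  have hexpand :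
      ∑ ε, (h ε - g ε) ^ 2 = ∑ ε, h ε ^ 2 - 2 * ∑ ε, h ε * g ε + ∑ ε, g ε * g ε := by
    rw [mul_sum, ← sum_sub_distrib, ← sum_add_distrib]
    exact sum_congr rfl fun ε _ => by ring
  have hsq : 0 ≤ ∑ ε, (h ε - g ε) ^ 2 := sum_nonneg fun ε _ => sq_nonneg _
  rw [pnorm_two_sq, le_div_iff₀ (by positivity)]
  linarith

lemma pnorm_add_le {p : ℝ} (hp : 1 ≤ p) (f g : (Fin n → Bool) → ℝ) :
    pnorm p (fun ε => f ε + g ε) ≤ pnorm p f + pnorm p g := by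
  have hc : (0 : ℝ) ≤ 2 ^ n := by positivity
  simp only [pnorm]
  rw [div_rpow (by positivity) hc, div_rpow (by positivity) hc, div_rpow (by positivity) hc,
    ← add_div]
  gcongr
  exact Lp_add_le univ f g hp

lemma pnorm_const_mul {p : ℝ} (hp : p ≠ 0) (c : ℝ) (f : (Fin n → Bool) → ℝ) :
    pnorm p (fun ε => c * f ε) = |c| * pnorm p f := by
  simp only [pnorm, abs_mul, mul_rpow (abs_nonneg c) (abs_nonneg _), ← mul_sum, mul_div_assoc]
  rw [mul_rpow (by positivity) (by positivity), ← rpow_mul (abs_nonneg c), mul_one_div_cancel hp,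
    rpow_one]

lemma pnorm_half_sq {p : ℝ} (hp : 0 < p) (f : (Fin n → Bool) → ℝ) :
    pnorm (p / 2) (fun ε => f ε ^ 2) = pnorm p f ^ 2 := by
  simp only [pnorm, abs_sq, sq_rpow_half]
  rw [← rpow_mul_natCast (by positivity)]
  congr 1
  field_simp
  norm_num

lemma pnorm_le_pnorm_of_exponent_le {p q : ℝ} (hq : 0 < q) (hqp : q ≤ p)
    (f : (Fin n → Bool) → ℝ) :
    pnorm q f ≤ pnorm p f := by
  set X := (∑ ε, |f ε| ^ q) / 2 ^ n
  have hX : 0 ≤ X := by positivity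
  have hjensen : X ^ (p / q) ≤ (∑ ε, |f ε| ^ p) / 2 ^ n := by
    have := rpow_arith_mean_le_arith_mean_rpow univ (fun _ => ((2 : ℝ) ^ n)⁻¹)
      (fun ε => |f ε| ^ q) (fun _ _ => by positivity) (by simp) (fun _ _ => by positivity)
      ((one_le_div hq).2 hqp)
    simp_rw [← rpow_mul (abs_nonneg _), mul_div_cancel₀ _ hq.ne', ← mul_sum,
      inv_mul_eq_div] at this
    exact this
  have hp : 0 < p := hq.trans_le hqp
  calc pnorm q f = (X ^ (p / q)) ^ (1 / p) := by
        rw [← rpow_mul hX]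
        unfold pnorm
        congr 1
        field_simp
    _ ≤ pnorm p f := by
        unfold pnorm
        gcongr

noncomputable def headMean (f : (Fin (n + 1) → Bool) → ℝ) (ε : Fin n → Bool) : ℝ :=
  (f (Fin.cons true ε) + f (Fin.cons false ε)) / 2

noncomputable def headDiff (f : (Fin (n + 1) → Bool) → ℝ) (ε : Fin n → Bool) : ℝ :=
  (f (Fin.cons true ε) - f (Fin.cons false ε)) / 2

lemma walsh_map_succEmb_cons (B : Finset (Fin n)) (b : Bool) (ε : Fin n → Bool) :
    walsh (B.map (Fin.succEmb n)) (Fin.cons b ε) = walsh B ε := by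
  simp [walsh]

lemma zero_notMem_map_succEmb (B : Finset (Fin n)) :
    (0 : Fin (n + 1)) ∉ B.map (Fin.succEmb n) := by
  simp [Fin.succ_ne_zero]

lemma walsh_insert_zero_map_succEmb_cons (B : Finset (Fin n)) (b : Bool) (ε : Fin n → Bool) :
    walsh (insert 0 (B.map (Fin.succEmb n))) (Fin.cons b ε)
      = (if b then 1 else -1) * walsh B ε := by
  rw [walsh, prod_insert (zero_notMem_map_succEmb B), Fin.cons_zero, ← walsh,
    walsh_map_succEmb_cons]

lemma fourierCoef_headMean (f : (Fin (n + 1) → Bool) → ℝ) (B : Finset (Fin n)) :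
    fourierCoef (headMean f) B = fourierCoef f (B.map (Fin.succEmb n)) := by
  simp only [fourierCoef, sum_cube_succ, walsh_map_succEmb_cons, headMean, pow_succ, sum_div]
  refine sum_congr rfl fun ε _ => by ring

lemma fourierCoef_headDiff (f : (Fin (n + 1) → Bool) → ℝ) (B : Finset (Fin n)) :
    fourierCoef (headDiff f) B = fourierCoef f (insert 0 (B.map (Fin.succEmb n))) := by
  simp only [fourierCoef, sum_cube_succ, walsh_insert_zero_map_succEmb_cons, headDiff, pow_succ,
    sum_div]
  refine sum_congr rfl fun ε _ => by simp; ring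

lemma sum_finset_fin_succ (g : Finset (Fin (n + 1)) → ℝ) :
    ∑ A, g A = ∑ B : Finset (Fin n), g (B.map (Fin.succEmb n))
      + ∑ B : Finset (Fin n), g (insert 0 (B.map (Fin.succEmb n))) := by
  have hpow : ((univ : Finset (Fin n)).map (Fin.succEmb n)).powerset
      = univ.map (Finset.mapEmbedding (Fin.succEmb n)).toEmbedding := by
    ext A
    simp [Finset.subset_map_iff, eq_comm]
  have huniv : (univ : Finset (Fin (n + 1))) = insert 0 (univ.map (Fin.succEmb n)) := by
    ext i
    cases i using Fin.cases <;> simp [Fin.succ_ne_zero]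
  rw [← powerset_univ, huniv, sum_powerset_insert (zero_notMem_map_succEmb univ), hpow, sum_map,
    sum_map]
  rfl

lemma pnorm_sq_le_pnorm_headMean_headDiff {p : ℝ} (hp : 2 ≤ p)
    (f : (Fin (n + 1) → Bool) → ℝ) :
    pnorm p f ^ 2 ≤ pnorm (p / 2) (fun ε => headMean f ε ^ 2 + p * headDiff f ε ^ 2) := by
  have hp₀ : 0 < p := by linarith
  have hpair : ∀ ε, |f (Fin.cons true ε)| ^ p + |f (Fin.cons false ε)| ^ p
      ≤ |headMean f ε ^ 2 + p * headDiff f ε ^ 2| ^ (p / 2) * 2 := by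
    intro ε
    have key := abs_add_rpow_add_abs_sub_rpow_le hp (headMean f ε) (headDiff f ε)
    have hadd : headMean f ε + headDiff f ε = f (Fin.cons true ε) := by
      simp only [headMean, headDiff]; ring
    have hsub : headMean f ε - headDiff f ε = f (Fin.cons false ε) := by
      simp only [headMean, headDiff]; ring
    rw [hadd, hsub] at key
    rw [abs_of_nonneg (a := headMean f ε ^ 2 + p * headDiff f ε ^ 2) (by positivity), mul_comm]
    exact key
  have hexp : 1 / p * ((2 : ℕ) : ℝ) = 1 / (p / 2) := by field_simp; norm_num
  rw [pnorm, ← rpow_mul_natCast (by positivity), hexp, pnorm]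
  refine rpow_le_rpow (by positivity) ?_ (by positivity)
  rw [pow_succ, ← div_div, div_right_comm, div_le_div_iff_of_pos_right (by positivity),
    div_le_iff₀ two_pos, sum_cube_succ, sum_mul]
  exact sum_le_sum fun ε _ => hpair ε

theorem pnorm_sq_le_sum_pow_card_mul_fourierCoef_sq {p : ℝ} (hp : 2 ≤ p)
    (f : (Fin n → Bool) → ℝ) : pnorm p f ^ 2 ≤ ∑ A, p ^ A.card * fourierCoef f A ^ 2 := by
  have hp₀ : 0 < p := by linarith
  induction n with
  | zero =>
    simp [pnorm, fourierCoef, walsh, eq_empty_of_isEmpty (default : Finset (Fin 0)),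
      ← rpow_mul (abs_nonneg _), hp₀.ne']
  | succ n ih =>
    calc pnorm p f ^ 2
        ≤ pnorm (p / 2) (fun ε => headMean f ε ^ 2 + p * headDiff f ε ^ 2) :=
          pnorm_sq_le_pnorm_headMean_headDiff hp f
      _ ≤ pnorm (p / 2) (fun ε => headMean f ε ^ 2)
            + pnorm (p / 2) (fun ε => p * headDiff f ε ^ 2) :=
          pnorm_add_le (by linarith) _ _
      _ = pnorm p (headMean f) ^ 2 + p * pnorm p (headDiff f) ^ 2 := by
          rw [pnorm_const_mul (by positivity), abs_of_pos hp₀, pnorm_half_sq hp₀, pnorm_half_sq hp₀]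
      _ ≤ ∑ B, p ^ B.card * fourierCoef (headMean f) B ^ 2
            + p * ∑ B, p ^ B.card * fourierCoef (headDiff f) B ^ 2 := by
          gcongr <;> exact ih _
      _ = ∑ A, p ^ A.card * fourierCoef f A ^ 2 := by
          rw [sum_finset_fin_succ, mul_sum]
          simp only [fourierCoef_headMean, fourierCoef_headDiff, card_map,
            card_insert_of_notMem (zero_notMem_map_succEmb _), pow_succ]
          congr 1
          exact sum_congr rfl fun B _ => by ring

lemma fourierCoef_radProj (k : ℕ) (h : (Fin n → Bool) → ℝ) (A : Finset (Fin n)) :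
    fourierCoef (radProj k h) A = if A.card = k then fourierCoef h A else 0 := by
  unfold radProj
  simp only [fourierCoef_sum_walsh, mem_powersetCard_univ]

lemma sum_pow_card_mul_fourierCoef_radProj_sq (p : ℝ) (k : ℕ) (h : (Fin n → Bool) → ℝ) :
    ∑ A, p ^ A.card * fourierCoef (radProj k h) A ^ 2
      = p ^ k * ∑ A ∈ powersetCard k univ, fourierCoef h A ^ 2 := by
  rw [powersetCard_eq_filter, powerset_univ, sum_filter, mul_sum]
  refine sum_congr rfl fun A _ => ?_
  rw [fourierCoef_radProj]
  split_ifs with hA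
  · rw [hA]
  · ring

end Cube

theorem radProj_pnorm_le_general (p : ℝ) (hp : 2 ≤ p) (n : ℕ) (k : ℕ)
    (h : (Fin n → Bool) → ℝ) :
    pnorm p (radProj k h) ≤ p ^ ((k : ℝ) / 2) * pnorm p h := by
  have hp₀ : 0 ≤ p := by linarith
  refine le_of_pow_le_pow_left₀ two_ne_zero
    (mul_nonneg (rpow_nonneg hp₀ _) (pnorm_nonneg p h)) ?_
  calc pnorm p (radProj k h) ^ 2
      ≤ ∑ A, p ^ A.card * fourierCoef (radProj k h) A ^ 2 :=
        pnorm_sq_le_sum_pow_card_mul_fourierCoef_sq hp _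
    _ = p ^ k * ∑ A ∈ powersetCard k univ, fourierCoef h A ^ 2 :=
        sum_pow_card_mul_fourierCoef_radProj_sq p k h
    _ ≤ p ^ k * pnorm 2 h ^ 2 := by gcongr; exact sum_fourierCoef_sq_le_pnorm_two_sq h _
    _ ≤ p ^ k * pnorm p h ^ 2 := by
        gcongr
        · exact pnorm_nonneg 2 h
        · exact pnorm_le_pnorm_of_exponent_le two_pos hp h
    _ = (p ^ ((k : ℝ) / 2) * pnorm p h) ^ 2 := by
        rw [mul_pow, ← rpow_mul_natCast hp₀]
        norm_num

/-- **Bonami's bound (3.1)**: for every `p ∈ [2,∞)`, `n ∈ ℕ`, `k ∈ {0,…,n}` and every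
`h : {-1,1}^n → ℝ`, `‖Rad_k h‖_p ≤ p^{k/2} ‖h‖_p`. -/
theorem radProj_pnorm_le (p : ℝ) (hp : 2 ≤ p) (n : ℕ) (k : ℕ) (hk : k ≤ n)
    (h : (Fin n → Bool) → ℝ) :
    pnorm p (radProj k h) ≤ p ^ ((k : ℝ) / 2) * pnorm p h :=
  radProj_pnorm_le_general p hp n k h
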